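/- If B ⊆ ℕ contains two elements p < q, then S(x,y) = xy + y - yq + 1 makes ⟨B,S⟩ an ℕ-Induction Model. -/

import Mathlib

/-- Cumulative closure `Cl_i(⟨B,S⟩)` for a binary generating function. -/
def clos2 (S : ℕ+ → ℕ+ → ℤ) (B : Set ℕ+) : ℕ → Set ℕ+
  | 0 => B
  | i + 1 => clos2 S B i ∪
      {n : ℕ+ | ∃ x ∈ clos2 S B i, ∃ y ∈ clos2 S B i, S x y = (n : ℤ)}

/-- `Sⁱ(B)` for a binary generating function. -/
def spow2 (S : ℕ+ → ℕ+ → ℤ) (B : Set ℕ+) : ℕ → Set ℕ+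
  | 0 => B
  | i + 1 => {n : ℕ+ | ∃ x ∈ clos2 S B i, ∃ y ∈ clos2 S B i, S x y = (n : ℤ)}

/-!
The element `q` acts as a successor: `S(q, y) = y + 1`. Hence everything from `p` on is generated,
in particular `q - 1`, and `S(q - 1, q - 1) = 1`; from `1` the successor then reaches every number.
-/

def generated (S : ℕ+ → ℕ+ → ℤ) (B : Set ℕ+) : Set ℕ+ :=
  ⋃ i, clos2 S B i

section Generated

variable {S : ℕ+ → ℕ+ → ℤ} {B : Set ℕ+}

lemma clos2_mono : Monotone (clos2 S B) :=
  monotone_nat_of_le_succ fun _ => Set.subset_union_left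

lemma subset_generated : B ⊆ generated S B :=
  Set.subset_iUnion (clos2 S B) 0

lemma map_mem_generated {x y n : ℕ+} (hx : x ∈ generated S B) (hy : y ∈ generated S B)
    (hn : S x y = n) : n ∈ generated S B := by
  obtain ⟨i, hxi⟩ := Set.mem_iUnion.1 hx
  obtain ⟨j, hyj⟩ := Set.mem_iUnion.1 hy
  exact Set.mem_iUnion.2 ⟨max i j + 1, Or.inr
    ⟨x, clos2_mono (le_max_left i j) hxi, y, clos2_mono (le_max_right i j) hyj, hn⟩⟩

lemma generated_subset_iUnion_spow2 : generated S B ⊆ ⋃ i, spow2 S B i := by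
  refine Set.iUnion_subset fun i => ?_
  induction i with
  | zero => exact Set.subset_iUnion (spow2 S B) 0
  | succ i ih => exact Set.union_subset ih (Set.subset_iUnion (spow2 S B) (i + 1))

lemma mem_generated_of_le_of_succ {q a n : ℕ+} (hq : q ∈ generated S B)
    (hsucc : ∀ y : ℕ+, S q y = y + 1) (ha : a ∈ generated S B) (han : a ≤ n) :
    n ∈ generated S B := by
  induction n using PNat.recOn with
  | one => rwa [le_antisymm han one_le] at ha
  | succ n ih =>
    rcases han.lt_or_eq with han | rfl
    · exact map_mem_generated hq (ih (PNat.lt_add_one_iff.1 han)) (by push_cast; exact hsucc n)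
    · exact ha

end Generated

/-- If `B` contains two elements `p < q`, then `S(x,y) = xy + y - yq + 1` makes `⟨B,S⟩` an
ℕ-Induction Model. -/
theorem multiplicative_two_elements_induction_model (B : Set ℕ+) (p q : ℕ+) (hpq : p < q)
    (hp : p ∈ B) (hq : q ∈ B) :
    (⋃ i, spow2 (fun x y => (x : ℤ) * y + y - y * q + 1) B i) = Set.univ := by
  set S : ℕ+ → ℕ+ → ℤ := fun x y => (x : ℤ) * y + y - y * q + 1
  have hsucc : ∀ y : ℕ+, S q y = y + 1 := fun y => by ring
  have hqG : q ∈ generated S B := subset_generated hq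
  obtain ⟨r, rfl⟩ := PNat.exists_eq_succ_of_ne_one (one_le.trans_lt hpq).ne'
  have hrG : r ∈ generated S B :=
    mem_generated_of_le_of_succ hqG hsucc (subset_generated hp) (PNat.lt_add_one_iff.1 hpq)
  have hone : (1 : ℕ+) ∈ generated S B :=
    map_mem_generated hrG hrG (by simp only [S]; push_cast; ring)
  refine Set.eq_univ_of_forall fun n => generated_subset_iUnion_spow2 ?_
  exact mem_generated_of_le_of_succ hqG hsucc hone one_le
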